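/- arXiv:gr-qc/9901063 — 2 statements merged into one kernel-verified Lean document; each statement's English description precedes it below -/
import Mathlib

section
/- In the trousers Morse geometry the metric factorises through the two null coordinate functions: for every point p = (x,y) ∈ ℝ² with (x,y) ≠ (0,0) and every vector w ∈ ℝ², g_p(w,w) = −(∇u(p)·w)(∇v(p)·w), where u(x,y) = √(ζ−1)(x²−y²) + 2xy and v(x,y) = √(ζ−1)(x²−y²) − 2xy and ∇ denotes the Euclidean gradient. Consequently a C¹ curve γ in N satisfies g_{γ(t)}(γ'(t),γ'(t)) = 0 at a parameter value t if and only if (u∘γ)'(t) = 0 or (v∘γ)'(t) = 0; in particular every C¹ curve along which u is constant, or along which v is constant, is a null curve. -/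
noncomputable section

open Set

/-- The punctured disc `N = {(x,y) : 0 < x² + y² < ε²}`. -/
def N2 (ε : ℝ) : Set (ℝ × ℝ) :=
  {p | 0 < p.1 ^ 2 + p.2 ^ 2 ∧ p.1 ^ 2 + p.2 ^ 2 < ε ^ 2}

/-- The trousers Morse metric (quadratic form) built from `f(x,y) = y² − x²`. -/
def g2 (ζ : ℝ) (p w : ℝ × ℝ) : ℝ :=
  4 * ((p.2 ^ 2 - (ζ - 1) * p.1 ^ 2) * w.1 ^ 2 + 2 * ζ * p.1 * p.2 * w.1 * w.2 +
    (p.1 ^ 2 - (ζ - 1) * p.2 ^ 2) * w.2 ^ 2)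

/-- The null coordinate `u(x,y) = √(ζ−1)(x²−y²) + 2xy`. -/
def uu (ζ : ℝ) (p : ℝ × ℝ) : ℝ :=
  Real.sqrt (ζ - 1) * (p.1 ^ 2 - p.2 ^ 2) + 2 * p.1 * p.2

/-- The null coordinate `v(x,y) = √(ζ−1)(x²−y²) − 2xy`. -/
def vv (ζ : ℝ) (p : ℝ × ℝ) : ℝ :=
  Real.sqrt (ζ - 1) * (p.1 ^ 2 - p.2 ^ 2) - 2 * p.1 * p.2

def m1 (ζ : ℝ) : ℝ := (Real.sqrt ζ - 1) / Real.sqrt (ζ - 1)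
def m2 (ζ : ℝ) : ℝ := (Real.sqrt ζ + 1) / Real.sqrt (ζ - 1)

/-- A future-directed timelike curve: a C¹ curve in `N` with everywhere timelike,
future-pointing tangent (`⟨∇f(γ), γ'⟩ = −2xγ₁' + 2yγ₂' > 0` where `f = y² − x²`). -/
def Timelike2 (ζ ε : ℝ) (γ γ' : ℝ → ℝ × ℝ) : Prop :=
  (∀ t ∈ Icc (0 : ℝ) 1, HasDerivAt γ (γ' t) t) ∧
  ContinuousOn γ' (Icc (0 : ℝ) 1) ∧
  (∀ t ∈ Icc (0 : ℝ) 1, γ t ∈ N2 ε) ∧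
  (∀ t ∈ Icc (0 : ℝ) 1, g2 ζ (γ t) (γ' t) < 0) ∧
  (∀ t ∈ Icc (0 : ℝ) 1, 0 < -2 * (γ t).1 * (γ' t).1 + 2 * (γ t).2 * (γ' t).2)

/-- The chronology relation `q ≪ p`. -/
def chron2 (ζ ε : ℝ) (q p : ℝ × ℝ) : Prop :=
  ∃ γ γ', Timelike2 ζ ε γ γ' ∧ γ 0 = q ∧ γ 1 = p

def Iplus2 (ζ ε : ℝ) (q : ℝ × ℝ) : Set (ℝ × ℝ) := {p ∈ N2 ε | chron2 ζ ε q p}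

def Iminus2 (ζ ε : ℝ) (q : ℝ × ℝ) : Set (ℝ × ℝ) := {p ∈ N2 ε | chron2 ζ ε p q}

/-- The common past `↓U` (interior in the open set `N` of the set of points
chronologically preceding every point of `U`). -/
def down2 (ζ ε : ℝ) (U : Set (ℝ × ℝ)) : Set (ℝ × ℝ) :=
  interior {p ∈ N2 ε | ∀ u ∈ U, chron2 ζ ε p u}

/-- Euclidean dot product on ℝ². -/
def dot2 (a b : ℝ × ℝ) : ℝ := a.1 * b.1 + a.2 * b.2

/-- Euclidean gradient of `u`. -/
def gradU (ζ : ℝ) (p : ℝ × ℝ) : ℝ × ℝ :=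
  (2 * Real.sqrt (ζ - 1) * p.1 + 2 * p.2, -(2 * Real.sqrt (ζ - 1) * p.2) + 2 * p.1)

/-- Euclidean gradient of `v`. -/
def gradV (ζ : ℝ) (p : ℝ × ℝ) : ℝ × ℝ :=
  (2 * Real.sqrt (ζ - 1) * p.1 - 2 * p.2, -(2 * Real.sqrt (ζ - 1) * p.2) - 2 * p.1)

lemma hasDerivAt_uu_comp (ζ : ℝ) {γ : ℝ → ℝ × ℝ} {d : ℝ × ℝ} {t : ℝ}
    (h : HasDerivAt γ d t) :
    HasDerivAt (fun s => uu ζ (γ s)) (dot2 (gradU ζ (γ t)) d) t := by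
  have hx : HasDerivAt (fun s => (γ s).1) d.1 t := (hasFDerivAt_fst.comp_hasDerivAt t h :)
  have hy : HasDerivAt (fun s => (γ s).2) d.2 t := (hasFDerivAt_snd.comp_hasDerivAt t h :)
  exact ((((hx.fun_pow 2).fun_sub (hy.fun_pow 2)).const_mul (Real.sqrt (ζ - 1))).fun_add
    ((hx.const_mul 2).fun_mul hy)).congr_deriv (by simp only [dot2, gradU]; push_cast; ring)

lemma hasDerivAt_vv_comp (ζ : ℝ) {γ : ℝ → ℝ × ℝ} {d : ℝ × ℝ} {t : ℝ}
    (h : HasDerivAt γ d t) :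
    HasDerivAt (fun s => vv ζ (γ s)) (dot2 (gradV ζ (γ t)) d) t := by
  have hx : HasDerivAt (fun s => (γ s).1) d.1 t := (hasFDerivAt_fst.comp_hasDerivAt t h :)
  have hy : HasDerivAt (fun s => (γ s).2) d.2 t := (hasFDerivAt_snd.comp_hasDerivAt t h :)
  exact ((((hx.fun_pow 2).fun_sub (hy.fun_pow 2)).const_mul (Real.sqrt (ζ - 1))).fun_sub
    ((hx.const_mul 2).fun_mul hy)).congr_deriv (by simp only [dot2, gradV]; push_cast; ring)

/-- A polynomial identity once `√(ζ−1)² = ζ − 1` is substituted. -/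
lemma g2_eq_neg_dot_gradU_mul_dot_gradV {ζ : ℝ} (hζ : 1 ≤ ζ) (p w : ℝ × ℝ) :
    g2 ζ p w = -(dot2 (gradU ζ p) w * dot2 (gradV ζ p) w) := by
  have hs : Real.sqrt (ζ - 1) ^ 2 = ζ - 1 := Real.sq_sqrt (by linarith)
  simp only [g2, dot2, gradU, gradV]
  linear_combination
    (4 * w.1 ^ 2 * p.1 ^ 2 + 4 * w.2 ^ 2 * p.2 ^ 2 - 8 * p.1 * p.2 * w.1 * w.2) * hs

lemma g2_eq_zero_iff {ζ : ℝ} (hζ : 1 ≤ ζ) (p w : ℝ × ℝ) :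
    g2 ζ p w = 0 ↔ dot2 (gradU ζ p) w = 0 ∨ dot2 (gradV ζ p) w = 0 := by
  rw [g2_eq_neg_dot_gradU_mul_dot_gradV hζ, neg_eq_zero, mul_eq_zero]

lemma HasDerivAt.eq_zero_of_forall_Icc_eq {E : Type*} [NormedAddCommGroup E] [NormedSpace ℝ E]
    {f : ℝ → E} {f' c : E} {a b t : ℝ} (hab : a < b) (hf : ∀ s ∈ Icc a b, f s = c)
    (ht : t ∈ Icc a b) (h : HasDerivAt f f' t) : f' = 0 :=
  (uniqueDiffOn_Icc hab t ht).eq_deriv _ h.hasDerivWithinAt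
    ((hasDerivWithinAt_const t _ c).congr hf (hf t ht))

theorem stmt0_general (ζ ε : ℝ) (hζ : 1 < ζ) :
    (∀ p : ℝ × ℝ, p ≠ (0, 0) → ∀ w : ℝ × ℝ,
      g2 ζ p w = -(dot2 (gradU ζ p) w * dot2 (gradV ζ p) w)) ∧
    (∀ γ γ' : ℝ → ℝ × ℝ,
      (∀ t ∈ Icc (0 : ℝ) 1, HasDerivAt γ (γ' t) t) →
      ContinuousOn γ' (Icc (0 : ℝ) 1) →
      (∀ t ∈ Icc (0 : ℝ) 1, γ t ∈ N2 ε) →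
      ((∀ t ∈ Icc (0 : ℝ) 1,
          (g2 ζ (γ t) (γ' t) = 0 ↔
            deriv (fun s => uu ζ (γ s)) t = 0 ∨ deriv (fun s => vv ζ (γ s)) t = 0)) ∧
        ((∀ t ∈ Icc (0 : ℝ) 1, uu ζ (γ t) = uu ζ (γ 0)) →
          ∀ t ∈ Icc (0 : ℝ) 1, g2 ζ (γ t) (γ' t) = 0) ∧
        ((∀ t ∈ Icc (0 : ℝ) 1, vv ζ (γ t) = vv ζ (γ 0)) →
          ∀ t ∈ Icc (0 : ℝ) 1, g2 ζ (γ t) (γ' t) = 0))) := by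
  have hζ' : 1 ≤ ζ := hζ.le
  refine ⟨fun p _ w => g2_eq_neg_dot_gradU_mul_dot_gradV hζ' p w, fun γ γ' hγ _ _ => ?_⟩
  have hu := fun t ht => hasDerivAt_uu_comp ζ (hγ t ht)
  have hv := fun t ht => hasDerivAt_vv_comp ζ (hγ t ht)
  refine ⟨fun t ht => ?_, fun hconst t ht => ?_, fun hconst t ht => ?_⟩
  · rw [(hu t ht).deriv, (hv t ht).deriv, g2_eq_zero_iff hζ']
  · exact (g2_eq_zero_iff hζ' _ _).2 <|
      .inl <| (hu t ht).eq_zero_of_forall_Icc_eq one_pos hconst ht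
  · exact (g2_eq_zero_iff hζ' _ _).2 <|
      .inr <| (hv t ht).eq_zero_of_forall_Icc_eq one_pos hconst ht

/-- the trousers Morse metric factorises through the null coordinates
`u` and `v`: `g_p(w,w) = −(∇u(p)·w)(∇v(p)·w)`; consequently a C¹ curve is null at `t`
iff `(u∘γ)'(t) = 0` or `(v∘γ)'(t) = 0`, and any C¹ curve along which `u` (or `v`) is
constant is null. -/
theorem stmt0 (ζ ε : ℝ) (hζ : 1 < ζ) (hε : 0 < ε) :
    (∀ p : ℝ × ℝ, p ≠ (0, 0) → ∀ w : ℝ × ℝ,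
      g2 ζ p w = -(dot2 (gradU ζ p) w * dot2 (gradV ζ p) w)) ∧
    (∀ γ γ' : ℝ → ℝ × ℝ,
      (∀ t ∈ Icc (0 : ℝ) 1, HasDerivAt γ (γ' t) t) →
      ContinuousOn γ' (Icc (0 : ℝ) 1) →
      (∀ t ∈ Icc (0 : ℝ) 1, γ t ∈ N2 ε) →
      ((∀ t ∈ Icc (0 : ℝ) 1,
          (g2 ζ (γ t) (γ' t) = 0 ↔
            deriv (fun s => uu ζ (γ s)) t = 0 ∨ deriv (fun s => vv ζ (γ s)) t = 0)) ∧
        ((∀ t ∈ Icc (0 : ℝ) 1, uu ζ (γ t) = uu ζ (γ 0)) →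
          ∀ t ∈ Icc (0 : ℝ) 1, g2 ζ (γ t) (γ' t) = 0) ∧
        ((∀ t ∈ Icc (0 : ℝ) 1, vv ζ (γ t) = vv ζ (γ 0)) →
          ∀ t ∈ Icc (0 : ℝ) 1, g2 ζ (γ t) (γ' t) = 0))) :=
  stmt0_general ζ ε hζ
end
end

section
/- In the trousers Morse geometry, let q = (x_q, m₂x_q) with x_q > 0 be a point on the branch {y = m₂x, x > 0} of the future light cone ∂F of the Morse point (so that u(q) = 0 and v(q) < 0). Then I⁺(q) = {p = (p₁,p₂) ∈ N : p₂ > 0, u(p) < 0 and v(p) < v(q)} and I⁻(q) = {p = (p₁,p₂) ∈ N : p₁ > 0, u(p) > 0 and v(p) > v(q)}; in particular I⁻(q) contains no point with p₁ ≤ 0. -/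
/-!
Write `z = x + iy` and `w = z²`. In the coordinate `w` the null coordinates
`u = √(ζ-1) Re w + Im w` and `v = √(ζ-1) Re w - Im w` are real-linear, and `g = -du dv`; so a
curve is future timelike exactly when `u` and `v` both strictly decrease along it. Hence `q ≪ p`
forces `u(p) < u(q)` and `v(p) < v(q)`. The sign conditions hold because `f = y² - x²` increases
along the curve, so `y` cannot vanish once `f > 0`, and because to the past of `q` we have
`u > u(q) = 0`, which rules out `x = 0`. Conversely, when `u` and `v` both drop, the straight
segment from `q²` to `p²` in the `w`-plane lifts through a branch of `√w` (`i√(-w)` towards the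
future, the principal one towards the past) to a timelike curve. For this the segment has to
avoid the branch cut, and it stays in the punctured disc because the disc `|w| < ε²` is convex.
-/

noncomputable section

open Set

def duu (ζ : ℝ) (p w : ℝ × ℝ) : ℝ :=
  (2 * √(ζ - 1) * p.1 + 2 * p.2) * w.1 + (2 * p.1 - 2 * √(ζ - 1) * p.2) * w.2

def dvv (ζ : ℝ) (p w : ℝ × ℝ) : ℝ :=
  (2 * √(ζ - 1) * p.1 - 2 * p.2) * w.1 - (2 * p.1 + 2 * √(ζ - 1) * p.2) * w.2

lemma g2_eq_neg_duu_mul_dvv {ζ : ℝ} (hζ : 1 ≤ ζ) (p w : ℝ × ℝ) :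
    g2 ζ p w = -(duu ζ p w * dvv ζ p w) := by
  have hs : √(ζ - 1) ^ 2 = ζ - 1 := Real.sq_sqrt (by linarith)
  simp only [g2, duu, dvv]
  linear_combination (4 * (p.1 * w.1 - p.2 * w.2) ^ 2) * hs

lemma duu_add_dvv (ζ : ℝ) (p w : ℝ × ℝ) :
    duu ζ p w + dvv ζ p w = -(2 * √(ζ - 1)) * (-2 * p.1 * w.1 + 2 * p.2 * w.2) := by
  simp only [duu, dvv]; ring

lemma timelike_future_iff {ζ : ℝ} (hζ : 1 < ζ) (p w : ℝ × ℝ) :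
    g2 ζ p w < 0 ∧ 0 < -2 * p.1 * w.1 + 2 * p.2 * w.2 ↔ duu ζ p w < 0 ∧ dvv ζ p w < 0 := by
  have hs : 0 < √(ζ - 1) := Real.sqrt_pos.2 (by linarith)
  rw [g2_eq_neg_duu_mul_dvv hζ.le]
  have hsum := duu_add_dvv ζ p w
  constructor
  · rintro ⟨hg, hf⟩
    have hneg : duu ζ p w + dvv ζ p w < 0 := by rw [hsum]; nlinarith
    constructor <;> nlinarith
  · rintro ⟨hu, hv⟩
    exact ⟨by nlinarith, by nlinarith⟩

section Curves

variable {γ : ℝ → ℝ × ℝ} {w : ℝ × ℝ} {t : ℝ}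

lemma HasDerivAt.uu_comp (ζ : ℝ) (h : HasDerivAt γ w t) :
    HasDerivAt (fun t => uu ζ (γ t)) (duu ζ (γ t) w) t := by
  have h1 : HasDerivAt (fun t => (γ t).1) w.1 t := h.fst
  have h2 : HasDerivAt (fun t => (γ t).2) w.2 t := h.snd
  exact ((((h1.fun_pow 2).fun_sub (h2.fun_pow 2)).const_mul √(ζ - 1)).fun_add
    ((h1.const_mul 2).fun_mul h2)).congr_deriv (by simp only [duu]; ring)

lemma HasDerivAt.vv_comp (ζ : ℝ) (h : HasDerivAt γ w t) :
    HasDerivAt (fun t => vv ζ (γ t)) (dvv ζ (γ t) w) t := by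
  have h1 : HasDerivAt (fun t => (γ t).1) w.1 t := h.fst
  have h2 : HasDerivAt (fun t => (γ t).2) w.2 t := h.snd
  exact ((((h1.fun_pow 2).fun_sub (h2.fun_pow 2)).const_mul √(ζ - 1)).fun_sub
    ((h1.const_mul 2).fun_mul h2)).congr_deriv (by simp only [dvv]; ring)

lemma HasDerivAt.morse_comp (h : HasDerivAt γ w t) :
    HasDerivAt (fun t => (γ t).2 ^ 2 - (γ t).1 ^ 2)
      (-2 * (γ t).1 * w.1 + 2 * (γ t).2 * w.2) t := by
  have h1 : HasDerivAt (fun t => (γ t).1) w.1 t := h.fst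
  have h2 : HasDerivAt (fun t => (γ t).2) w.2 t := h.snd
  exact ((h2.fun_pow 2).fun_sub (h1.fun_pow 2)).congr_deriv (by ring)

end Curves

lemma strictMonoOn_Icc_of_hasDerivAt_pos {f f' : ℝ → ℝ} {a b : ℝ}
    (hf : ∀ t ∈ Icc a b, HasDerivAt f (f' t) t) (hf' : ∀ t ∈ Icc a b, 0 < f' t) :
    StrictMonoOn f (Icc a b) := by
  refine strictMonoOn_of_deriv_pos (convex_Icc a b)
    (fun t ht => (hf t ht).continuousAt.continuousWithinAt) fun t ht => ?_
  rw [interior_Icc] at ht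
  rw [(hf t (Ioo_subset_Icc_self ht)).deriv]
  exact hf' t (Ioo_subset_Icc_self ht)

lemma strictAntiOn_Icc_of_hasDerivAt_neg {f f' : ℝ → ℝ} {a b : ℝ}
    (hf : ∀ t ∈ Icc a b, HasDerivAt f (f' t) t) (hf' : ∀ t ∈ Icc a b, f' t < 0) :
    StrictAntiOn f (Icc a b) := by
  refine strictAntiOn_of_deriv_neg (convex_Icc a b)
    (fun t ht => (hf t ht).continuousAt.continuousWithinAt) fun t ht => ?_
  rw [interior_Icc] at ht
  rw [(hf t (Ioo_subset_Icc_self ht)).deriv]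
  exact hf' t (Ioo_subset_Icc_self ht)

lemma pos_iff_pos_of_continuousOn_of_ne_zero {f : ℝ → ℝ} {a b : ℝ} (hab : a ≤ b)
    (hf : ContinuousOn f (Icc a b)) (h0 : ∀ t ∈ Icc a b, f t ≠ 0) : 0 < f a ↔ 0 < f b := by
  constructor
  · intro ha
    by_contra! hb
    obtain ⟨c, hc, hc0⟩ := intermediate_value_Icc' hab hf ⟨hb, ha.le⟩
    exact h0 c hc hc0
  · intro hb
    by_contra! ha
    obtain ⟨c, hc, hc0⟩ := intermediate_value_Icc hab hf ⟨ha, hb.le⟩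
    exact h0 c hc hc0

namespace Timelike2

variable {ζ ε : ℝ} {γ γ' : ℝ → ℝ × ℝ}

lemma continuousOn (hT : Timelike2 ζ ε γ γ') : ContinuousOn γ (Icc 0 1) :=
  fun t ht => (hT.1 t ht).continuousAt.continuousWithinAt

lemma strictAntiOn_uu (hζ : 1 < ζ) (hT : Timelike2 ζ ε γ γ') :
    StrictAntiOn (fun t => uu ζ (γ t)) (Icc 0 1) :=
  strictAntiOn_Icc_of_hasDerivAt_neg (fun t ht => (hT.1 t ht).uu_comp ζ)
    fun t ht => ((timelike_future_iff hζ _ _).1 ⟨hT.2.2.2.1 t ht, hT.2.2.2.2 t ht⟩).1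

lemma strictAntiOn_vv (hζ : 1 < ζ) (hT : Timelike2 ζ ε γ γ') :
    StrictAntiOn (fun t => vv ζ (γ t)) (Icc 0 1) :=
  strictAntiOn_Icc_of_hasDerivAt_neg (fun t ht => (hT.1 t ht).vv_comp ζ)
    fun t ht => ((timelike_future_iff hζ _ _).1 ⟨hT.2.2.2.1 t ht, hT.2.2.2.2 t ht⟩).2

lemma strictMonoOn_morse (hT : Timelike2 ζ ε γ γ') :
    StrictMonoOn (fun t => (γ t).2 ^ 2 - (γ t).1 ^ 2) (Icc 0 1) :=
  strictMonoOn_Icc_of_hasDerivAt_pos (fun t ht => (hT.1 t ht).morse_comp) hT.2.2.2.2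

end Timelike2

lemma pos_snd_of_chron2 {ζ ε : ℝ} {q p : ℝ × ℝ} (h : chron2 ζ ε q p)
    (hqf : q.1 ^ 2 < q.2 ^ 2) (hq2 : 0 < q.2) : 0 < p.2 := by
  obtain ⟨γ, γ', hT, rfl, rfl⟩ := h
  have hne : ∀ t ∈ Icc (0 : ℝ) 1, (γ t).2 ≠ 0 := by
    intro t ht h0
    have := hT.strictMonoOn_morse.monotoneOn (left_mem_Icc.2 zero_le_one) ht ht.1
    simp only [h0] at this
    nlinarith [sq_nonneg (γ t).1]
  exact (pos_iff_pos_of_continuousOn_of_ne_zero zero_le_one hT.continuousOn.snd hne).1 hq2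

lemma pos_fst_of_chron2 {ζ ε : ℝ} {p q : ℝ × ℝ} (hζ : 1 < ζ) (h : chron2 ζ ε p q)
    (hqu : 0 ≤ uu ζ q) (hq1 : 0 < q.1) : 0 < p.1 := by
  obtain ⟨γ, γ', hT, rfl, rfl⟩ := h
  have hne : ∀ t ∈ Icc (0 : ℝ) 1, (γ t).1 ≠ 0 := by
    intro t ht h0
    rcases ht.2.eq_or_lt with rfl | ht1
    · exact hq1.ne' h0
    · have hlt : uu ζ (γ 1) < uu ζ (γ t) :=
        hT.strictAntiOn_uu hζ ht (right_mem_Icc.2 zero_le_one) ht1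
      have hle : uu ζ (γ t) ≤ 0 := by
        simp only [uu, h0]
        nlinarith [Real.sqrt_nonneg (ζ - 1), sq_nonneg (γ t).2]
      linarith
  exact (pos_iff_pos_of_continuousOn_of_ne_zero zero_le_one hT.continuousOn.fst hne).2 hq1

lemma uu_lt_and_vv_lt_of_chron2 {ζ ε : ℝ} {q p : ℝ × ℝ} (hζ : 1 < ζ) (h : chron2 ζ ε q p) :
    uu ζ p < uu ζ q ∧ vv ζ p < vv ζ q := by
  obtain ⟨γ, γ', hT, rfl, rfl⟩ := h
  have h0 : (0 : ℝ) ∈ Icc (0 : ℝ) 1 := left_mem_Icc.2 zero_le_one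
  have h1 : (1 : ℝ) ∈ Icc (0 : ℝ) 1 := right_mem_Icc.2 zero_le_one
  exact ⟨hT.strictAntiOn_uu hζ h0 h1 zero_lt_one, hT.strictAntiOn_vv hζ h0 h1 zero_lt_one⟩

namespace Complex

lemma sq_mem_slitPlane {z : ℂ} (h : z.re ≠ 0) : z ^ 2 ∈ slitPlane := by
  rw [mem_slitPlane_iff]
  by_cases him : z.im = 0
  · left
    simp only [sq, mul_re, him, mul_zero, sub_zero]
    exact mul_self_pos.2 h
  · right
    simp only [sq, mul_im]
    intro h0
    exact him ((mul_eq_zero.1 (by linarith : z.re * z.im = 0)).resolve_left h)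

lemma neg_sq_mem_slitPlane {z : ℂ} (h : z.im ≠ 0) : -(z ^ 2) ∈ slitPlane := by
  have : -(z ^ 2) = (I * z) ^ 2 := by linear_combination (-z ^ 2) * I_sq
  rw [this]
  exact sq_mem_slitPlane (by simpa using h)

lemma sq_sqrt (w : ℂ) : sqrt w ^ 2 = w := cpow_ofNat_inv_pow w 2

lemma sqrt_sq_of_re_pos {z : ℂ} (h : 0 < z.re) : sqrt (z ^ 2) = z := sq_cpow_two_inv h

lemma I_mul_sqrt_neg_sq_of_im_pos {z : ℂ} (h : 0 < z.im) : I * sqrt (-(z ^ 2)) = z := by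
  have : -(z ^ 2) = (-I * z) ^ 2 := by linear_combination (-z ^ 2) * I_sq
  rw [this, sqrt_sq_of_re_pos (by simpa using h)]
  linear_combination (-z) * I_sq

end Complex

section SquareChart

open Complex

lemma uu_re_im (ζ : ℝ) (z : ℂ) : uu ζ (z.re, z.im) = √(ζ - 1) * (z ^ 2).re + (z ^ 2).im := by
  simp only [uu, sq, mul_re, mul_im]; ring

lemma vv_re_im (ζ : ℝ) (z : ℂ) : vv ζ (z.re, z.im) = √(ζ - 1) * (z ^ 2).re - (z ^ 2).im := by
  simp only [vv, sq, mul_re, mul_im]; ring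

lemma duu_re_im (ζ : ℝ) (z ω : ℂ) :
    duu ζ (z.re, z.im) (ω.re, ω.im) = √(ζ - 1) * (2 * z * ω).re + (2 * z * ω).im := by
  simp only [duu, mul_re, mul_im, re_ofNat, im_ofNat, zero_mul, sub_zero, add_zero]; ring

lemma dvv_re_im (ζ : ℝ) (z ω : ℂ) :
    dvv ζ (z.re, z.im) (ω.re, ω.im) = √(ζ - 1) * (2 * z * ω).re - (2 * z * ω).im := by
  simp only [dvv, mul_re, mul_im, re_ofNat, im_ofNat, zero_mul, sub_zero, add_zero]; ring

lemma mem_N2_re_im {ε : ℝ} {z : ℂ} : (z.re, z.im) ∈ N2 ε ↔ 0 < ‖z ^ 2‖ ∧ ‖z ^ 2‖ < ε ^ 2 := by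
  rw [norm_pow, Complex.sq_norm, normSq_apply]
  simp only [N2, mem_ofPred_eq, sq]

lemma DifferentiableAt.csqrt {w : ℝ → ℂ} {t : ℝ} (hw : DifferentiableAt ℝ w t)
    (h : w t ∈ slitPlane) : DifferentiableAt ℝ (fun s => Complex.sqrt (w s)) t :=
  ((hasStrictDerivAt_cpow_const h).hasDerivAt.comp t hw.hasDerivAt).differentiableAt

lemma hasDerivAt_add_ofReal_mul (a d : ℂ) (t : ℝ) :
    HasDerivAt (fun s : ℝ => a + s * d) d t := by
  simpa using ((hasDerivAt_id t).ofReal_comp.mul_const d).const_add a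

lemma hasDerivAt_of_sq_eq {c w : ℝ → ℂ} {w' : ℂ} {t : ℝ} (hc : DifferentiableAt ℝ c t)
    (hw : HasDerivAt w w' t) (hsq : ∀ s, c s ^ 2 = w s) (h0 : c t ≠ 0) :
    HasDerivAt c (w' / (2 * c t)) t := by
  have h2 : HasDerivAt (fun s => c s ^ 2) (2 * c t * deriv c t) t :=
    (hc.hasDerivAt.fun_pow 2).congr_deriv (by ring)
  rw [funext hsq] at h2
  rw [← h2.unique hw, mul_div_cancel_left₀ _ (mul_ne_zero two_ne_zero h0)]
  exact hc.hasDerivAt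

/-- In the chart `w = z²` the null coordinates are real-linear, so along a lift `c` of the segment
from `z₀²` to `z₁²` they change at the constant rates `u(z₁) - u(z₀)` and `v(z₁) - v(z₀)`. -/
theorem chron2_of_sq_eq_segment {ζ ε : ℝ} (hζ : 1 < ζ) {z₀ z₁ : ℂ} {c : ℝ → ℂ}
    (hz₀ : (z₀.re, z₀.im) ∈ N2 ε) (hz₁ : (z₁.re, z₁.im) ∈ N2 ε)
    (hu : uu ζ (z₁.re, z₁.im) < uu ζ (z₀.re, z₀.im))
    (hv : vv ζ (z₁.re, z₁.im) < vv ζ (z₀.re, z₀.im))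
    (hsq : ∀ t : ℝ, c t ^ 2 = z₀ ^ 2 + t * (z₁ ^ 2 - z₀ ^ 2))
    (hc : ∀ t ∈ Icc (0 : ℝ) 1, DifferentiableAt ℝ c t ∧ c t ≠ 0)
    (hc₀ : c 0 = z₀) (hc₁ : c 1 = z₁) :
    chron2 ζ ε (z₀.re, z₀.im) (z₁.re, z₁.im) := by
  set D := z₁ ^ 2 - z₀ ^ 2
  have hderiv : ∀ t ∈ Icc (0 : ℝ) 1, HasDerivAt c (D / (2 * c t)) t := fun t ht =>
    hasDerivAt_of_sq_eq (hc t ht).1 (hasDerivAt_add_ofReal_mul _ _ t) hsq (hc t ht).2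
  have hnull : ∀ t ∈ Icc (0 : ℝ) 1,
      duu ζ ((c t).re, (c t).im) ((D / (2 * c t)).re, (D / (2 * c t)).im) < 0 ∧
      dvv ζ ((c t).re, (c t).im) ((D / (2 * c t)).re, (D / (2 * c t)).im) < 0 := by
    intro t ht
    have hD : 2 * c t * (D / (2 * c t)) = D := by field_simp [(hc t ht).2]
    rw [duu_re_im, dvv_re_im, hD]
    rw [uu_re_im, uu_re_im] at hu
    rw [vv_re_im, vv_re_im] at hv
    simp only [D, sub_re, sub_im]
    constructor <;> linarith
  refine ⟨fun t => ((c t).re, (c t).im), fun t => ((D / (2 * c t)).re, (D / (2 * c t)).im),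
    ⟨fun t ht => ?_, fun t ht => ?_, fun t ht => ?_,
      fun t ht => ((timelike_future_iff hζ _ _).2 (hnull t ht)).1,
      fun t ht => ((timelike_future_iff hζ _ _).2 (hnull t ht)).2⟩, by simp [hc₀], by simp [hc₁]⟩
  · exact (reCLM.hasFDerivAt.comp_hasDerivAt t (hderiv t ht)).prodMk
      (imCLM.hasFDerivAt.comp_hasDerivAt t (hderiv t ht))
  · have hcont : ContinuousAt (fun s => D / (2 * c s)) t :=
      continuousAt_const.div (continuousAt_const.mul (hc t ht).1.continuousAt)
        (mul_ne_zero two_ne_zero (hc t ht).2)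
    exact ((continuous_re.continuousAt.comp hcont).prodMk
      (continuous_im.continuousAt.comp hcont)).continuousWithinAt
  · refine mem_N2_re_im.2 ⟨norm_pos_iff.2 (pow_ne_zero 2 (hc t ht).2), ?_⟩
    have hball := convex_ball (0 : ℂ) (ε ^ 2) (mem_ball_zero_iff.2 (mem_N2_re_im.1 hz₀).2)
      (mem_ball_zero_iff.2 (mem_N2_re_im.1 hz₁).2) (sub_nonneg.2 ht.2) ht.1 (by ring)
    rw [hsq, ← mem_ball_zero_iff]
    convert hball using 1
    simp only [real_smul, ofReal_sub, ofReal_one, D]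
    ring

/-- The lift through the principal branch of `√w`; the segment must avoid the cut `(-∞, 0]`. -/
theorem chron2_of_re_pos {ζ ε : ℝ} (hζ : 1 < ζ) {z₀ z₁ : ℂ} (h₀ : 0 < z₀.re) (h₁ : 0 < z₁.re)
    (hz₀ : (z₀.re, z₀.im) ∈ N2 ε) (hz₁ : (z₁.re, z₁.im) ∈ N2 ε)
    (hu : uu ζ (z₁.re, z₁.im) < uu ζ (z₀.re, z₀.im))
    (hv : vv ζ (z₁.re, z₁.im) < vv ζ (z₀.re, z₀.im)) (hu₁ : 0 ≤ uu ζ (z₁.re, z₁.im)) :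
    chron2 ζ ε (z₀.re, z₀.im) (z₁.re, z₁.im) := by
  have hslit : ∀ t ∈ Icc (0 : ℝ) 1, z₀ ^ 2 + t * (z₁ ^ 2 - z₀ ^ 2) ∈ slitPlane := by
    intro t ht
    rcases ht.2.eq_or_lt with rfl | ht1
    · simpa using sq_mem_slitPlane h₁.ne'
    · rw [uu_re_im, uu_re_im] at hu
      rw [uu_re_im] at hu₁
      rw [mem_slitPlane_iff]
      by_contra! hcut
      simp only [add_re, add_im, re_ofReal_mul, im_ofReal_mul, sub_re, sub_im] at hcut
      nlinarith [Real.sqrt_nonneg (ζ - 1), mul_pos (sub_pos.2 ht1) (sub_pos.2 hu),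
        mul_nonneg ht.1 hu₁]
  refine chron2_of_sq_eq_segment hζ hz₀ hz₁ hu hv (fun t => sq_sqrt _)
    (fun t ht => ⟨(hasDerivAt_add_ofReal_mul _ _ t).differentiableAt.csqrt (hslit t ht), ?_⟩)
    (by simpa using sqrt_sq_of_re_pos h₀) (by simpa using sqrt_sq_of_re_pos h₁)
  exact fun h0 => slitPlane_ne_zero (hslit t ht) (by rw [← sq_sqrt (_ + _), h0]; ring)

/-- The lift through the branch `i √(-w)` of `√w`; the segment must avoid the cut `[0, ∞)`. -/
theorem chron2_of_im_pos {ζ ε : ℝ} (hζ : 1 < ζ) {z₀ z₁ : ℂ} (h₀ : 0 < z₀.im) (h₁ : 0 < z₁.im)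
    (hz₀ : (z₀.re, z₀.im) ∈ N2 ε) (hz₁ : (z₁.re, z₁.im) ∈ N2 ε)
    (hu : uu ζ (z₁.re, z₁.im) < uu ζ (z₀.re, z₀.im))
    (hv : vv ζ (z₁.re, z₁.im) < vv ζ (z₀.re, z₀.im)) (hv₀ : vv ζ (z₀.re, z₀.im) ≤ 0) :
    chron2 ζ ε (z₀.re, z₀.im) (z₁.re, z₁.im) := by
  have hslit : ∀ t ∈ Icc (0 : ℝ) 1, -(z₀ ^ 2 + t * (z₁ ^ 2 - z₀ ^ 2)) ∈ slitPlane := by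
    intro t ht
    rcases ht.1.eq_or_lt with rfl | ht0
    · simpa using neg_sq_mem_slitPlane h₀.ne'
    · rw [vv_re_im, vv_re_im] at hv
      rw [vv_re_im] at hv₀
      rw [mem_slitPlane_iff]
      by_contra! hcut
      simp only [neg_re, neg_im, add_re, add_im, re_ofReal_mul, im_ofReal_mul, sub_re,
        sub_im] at hcut
      nlinarith [Real.sqrt_nonneg (ζ - 1), mul_pos ht0 (sub_pos.2 hv),
        mul_nonneg (sub_nonneg.2 ht.2) (neg_nonneg.2 hv₀)]
  refine chron2_of_sq_eq_segment hζ hz₀ hz₁ hu hv (c := fun t =>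
      I * Complex.sqrt (-(z₀ ^ 2 + t * (z₁ ^ 2 - z₀ ^ 2))))
    (fun t => by rw [mul_pow, sq_sqrt, I_sq]; ring)
    (fun t ht => ⟨((hasDerivAt_add_ofReal_mul _ _ t).neg.differentiableAt.csqrt
      (hslit t ht)).const_mul I, ?_⟩)
    (by simpa using I_mul_sqrt_neg_sq_of_im_pos h₀) (by simpa using I_mul_sqrt_neg_sq_of_im_pos h₁)
  exact mul_ne_zero I_ne_zero fun h0 =>
    slitPlane_ne_zero (hslit t ht) (by rw [← sq_sqrt (-_), h0]; ring)

end SquareChart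

theorem Iplus2_eq {ζ ε : ℝ} {q : ℝ × ℝ} (hζ : 1 < ζ) (hq : q ∈ N2 ε) (hq2 : 0 < q.2)
    (hqf : q.1 ^ 2 < q.2 ^ 2) (hqv : vv ζ q ≤ 0) :
    Iplus2 ζ ε q = {p ∈ N2 ε | 0 < p.2 ∧ uu ζ p < uu ζ q ∧ vv ζ p < vv ζ q} := by
  ext p
  refine ⟨fun ⟨hp, h⟩ => ⟨hp, pos_snd_of_chron2 h hqf hq2, uu_lt_and_vv_lt_of_chron2 hζ h⟩,
    fun ⟨hp, hp2, hu, hv⟩ => ⟨hp, ?_⟩⟩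
  exact chron2_of_im_pos (z₀ := ⟨q.1, q.2⟩) (z₁ := ⟨p.1, p.2⟩) hζ hq2 hp2 hq hp hu hv hqv

theorem Iminus2_eq {ζ ε : ℝ} {q : ℝ × ℝ} (hζ : 1 < ζ) (hq : q ∈ N2 ε) (hq1 : 0 < q.1)
    (hqu : 0 ≤ uu ζ q) :
    Iminus2 ζ ε q = {p ∈ N2 ε | 0 < p.1 ∧ uu ζ q < uu ζ p ∧ vv ζ q < vv ζ p} := by
  ext p
  refine ⟨fun ⟨hp, h⟩ => ⟨hp, pos_fst_of_chron2 hζ h hqu hq1, uu_lt_and_vv_lt_of_chron2 hζ h⟩,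
    fun ⟨hp, hp1, hu, hv⟩ => ⟨hp, ?_⟩⟩
  exact chron2_of_re_pos (z₀ := ⟨p.1, p.2⟩) (z₁ := ⟨q.1, q.2⟩) hζ hp1 hq1 hp hq hu hv hqu

lemma one_lt_m2 {ζ : ℝ} (hζ : 1 < ζ) : 1 < m2 ζ := by
  rw [m2, one_lt_div (Real.sqrt_pos.2 (by linarith))]
  linarith [Real.sqrt_lt_sqrt (by linarith : 0 ≤ ζ - 1) (by linarith : ζ - 1 < ζ)]

lemma uu_m2 {ζ : ℝ} (hζ : 1 < ζ) (x : ℝ) : uu ζ (x, m2 ζ * x) = 0 := by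
  have hs : √(ζ - 1) ^ 2 = ζ - 1 := Real.sq_sqrt (by linarith)
  have hz : √ζ ^ 2 = ζ := Real.sq_sqrt (by linarith)
  have hs0 : √(ζ - 1) ≠ 0 := (Real.sqrt_pos.2 (by linarith)).ne'
  simp only [uu, m2]
  field_simp
  linear_combination x ^ 2 * hs - x ^ 2 * hz

lemma vv_m2 {ζ : ℝ} (hζ : 1 < ζ) (x : ℝ) : vv ζ (x, m2 ζ * x) = -(4 * m2 ζ * x ^ 2) := by
  have h := uu_m2 hζ x
  simp only [uu, vv] at *
  linarith

theorem stmt3_general (ζ ε : ℝ) (hζ : 1 < ζ) (xq : ℝ) (hxq : 0 < xq)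
    (hq : (xq, m2 ζ * xq) ∈ N2 ε) :
    uu ζ (xq, m2 ζ * xq) = 0 ∧ vv ζ (xq, m2 ζ * xq) < 0 ∧
    Iplus2 ζ ε (xq, m2 ζ * xq) =
      {p ∈ N2 ε | 0 < p.2 ∧ uu ζ p < 0 ∧ vv ζ p < vv ζ (xq, m2 ζ * xq)} ∧
    Iminus2 ζ ε (xq, m2 ζ * xq) =
      {p ∈ N2 ε | 0 < p.1 ∧ 0 < uu ζ p ∧ vv ζ (xq, m2 ζ * xq) < vv ζ p} ∧
    ∀ p ∈ Iminus2 ζ ε (xq, m2 ζ * xq), ¬ p.1 ≤ 0 := by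
  have hm2 := one_lt_m2 hζ
  have huq := uu_m2 hζ xq
  have hvq : vv ζ (xq, m2 ζ * xq) < 0 := by rw [vv_m2 hζ]; nlinarith [mul_pos hxq hxq]
  have hIminus := Iminus2_eq hζ hq hxq huq.ge
  refine ⟨huq, hvq, ?_, by rw [hIminus, huq], fun p hp => not_le.2 (hIminus ▸ hp).2.1⟩
  have hqf : xq ^ 2 < (m2 ζ * xq) ^ 2 := pow_lt_pow_left₀ (lt_mul_left hxq hm2) hxq.le two_ne_zero
  rw [Iplus2_eq hζ hq (by dsimp only; positivity) hqf hvq.le, huq]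

/-- for `q = (x_q, m₂ x_q)`, `x_q > 0`, a point on the branch
`{y = m₂x, x > 0}` of the future light cone of the Morse point (so `u(q) = 0` and
`v(q) < 0`): `I⁺(q) = {p ∈ N | p₂ > 0, u(p) < 0, v(p) < v(q)}` and
`I⁻(q) = {p ∈ N | p₁ > 0, u(p) > 0, v(p) > v(q)}`; in particular `I⁻(q)` contains
no point with `p₁ ≤ 0`. -/
theorem stmt3 (ζ ε : ℝ) (hζ : 1 < ζ) (hε : 0 < ε) (xq : ℝ) (hxq : 0 < xq)
    (hq : (xq, m2 ζ * xq) ∈ N2 ε) :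
    uu ζ (xq, m2 ζ * xq) = 0 ∧ vv ζ (xq, m2 ζ * xq) < 0 ∧
    Iplus2 ζ ε (xq, m2 ζ * xq) =
      {p ∈ N2 ε | 0 < p.2 ∧ uu ζ p < 0 ∧ vv ζ p < vv ζ (xq, m2 ζ * xq)} ∧
    Iminus2 ζ ε (xq, m2 ζ * xq) =
      {p ∈ N2 ε | 0 < p.1 ∧ 0 < uu ζ p ∧ vv ζ (xq, m2 ζ * xq) < vv ζ p} ∧
    ∀ p ∈ Iminus2 ζ ε (xq, m2 ζ * xq), ¬ p.1 ≤ 0 :=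
  stmt3_general ζ ε hζ xq hxq hq
end
end
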